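/- arXiv:1604.01866 — 5 statements merged into one kernel-verified Lean document; each statement's English description precedes it below -/
import Mathlib

section
/- Let T : ℝⁿ → Set ℝⁿ be a maximal monotone operator and β > 0. Then the resolvent (I + βT)^{-1} is everywhere defined and single-valued: for every x ∈ ℝⁿ there exists exactly one z ∈ dom(T) such that x ∈ z + βT(z) (i.e., (x − z)/β ∈ T(z)). Moreover, the resulting map J_β : ℝⁿ → ℝⁿ is monotone: ⟨J_β(x) − J_β(y), x − y⟩ ≥ 0 for all x, y ∈ ℝⁿ. -/
open scoped RealInnerProductSpace

/-- `T` is a monotone set-valued operator. -/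
def IsMonotoneOp {n : ℕ}
    (T : EuclideanSpace ℝ (Fin n) → Set (EuclideanSpace ℝ (Fin n))) : Prop :=
  ∀ x y u v, u ∈ T x → v ∈ T y → ⟪x - y, u - v⟫ ≥ 0

/-- `T` is a maximal monotone set-valued operator. -/
def IsMaximalMonotoneOp {n : ℕ}
    (T : EuclideanSpace ℝ (Fin n) → Set (EuclideanSpace ℝ (Fin n))) : Prop :=
  IsMonotoneOp T ∧
    ∀ x u, (∀ y v, v ∈ T y → ⟪x - y, u - v⟫ ≥ 0) → u ∈ T x

/-!
Minty's theorem through Kirszbraun's theorem. For `(z, u)` in the graph of `T`, the map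
`z + β u ↦ z - β u` is `1`-Lipschitz precisely because `T` is monotone. By Kirszbraun, for every
`x` there is a `w` with `‖w - (y - β v)‖ ≤ ‖x - (y + β v)‖` for all `(y, v)` in the graph; for
`z = (w + x) / 2` this says `⟪z - y, (x - z) / β - v⟫ ≥ 0`, so maximality puts `(x - z) / β` in
`T z`. Uniqueness and monotonicity of the resolvent both follow from the firm nonexpansiveness
`‖z - z'‖² ≤ ⟪z - z', x - y⟫`.

Kirszbraun's theorem, in the form of a nonempty intersection of balls, is proved for finitely many
balls by minimizing `maxᵢ (‖w - hᵢ‖² - ‖x - pᵢ‖²)` over the convex hull of the centres: a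
minimizer lies in the convex hull of the centres where the maximum is attained (otherwise moving
towards that hull lowers every such term), and averaging over its barycentric weights shows that
the minimum is `≤ 0`. Compactness of balls handles infinitely many.
-/

open Filter Topology Finset

section Kirszbraun

variable {F : Type*} [NormedAddCommGroup F] [InnerProductSpace ℝ F]

theorem norm_sub_le_norm_add_iff_inner_nonneg (a b : F) :
    ‖a - b‖ ≤ ‖a + b‖ ↔ 0 ≤ ⟪a, b⟫ := by
  rw [← sq_le_sq₀ (norm_nonneg _) (norm_nonneg _), norm_sub_sq_real, norm_add_sq_real]
  constructor <;> intro <;> linarith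

section Weighted

variable {κ : Type*} [Fintype κ] {w : κ → ℝ}

theorem sum_mul_norm_sub_sq_eq (hw : ∑ a, w a = 1) (φ : κ → F) (c : F) :
    ∑ a, w a * ‖c - φ a‖ ^ 2 =
      ‖c - ∑ b, w b • φ b‖ ^ 2 + ∑ a, w a * ‖∑ b, w b • φ b - φ a‖ ^ 2 := by
  set q := ∑ b, w b • φ b
  have hdev : ∑ a, w a • (q - φ a) = 0 := by
    simp only [smul_sub, sum_sub_distrib, ← sum_smul, hw, one_smul, q, sub_self]
  have hsplit : ∀ a, w a * ‖c - φ a‖ ^ 2 =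
      w a * ‖c - q‖ ^ 2 + 2 * ⟪c - q, w a • (q - φ a)⟫ + w a * ‖q - φ a‖ ^ 2 := by
    intro a
    rw [real_inner_smul_right, show c - φ a = (c - q) + (q - φ a) by abel, norm_add_sq_real]
    ring
  rw [sum_congr rfl fun a _ => hsplit a, sum_add_distrib, sum_add_distrib, ← sum_mul, hw,
    ← mul_sum, ← inner_sum, hdev, inner_zero_right]
  ring

theorem sum_sum_mul_norm_sub_sq_eq (hw : ∑ a, w a = 1) (φ : κ → F) :
    ∑ a, ∑ b, w a * w b * ‖φ a - φ b‖ ^ 2 = 2 * ∑ a, w a * ‖∑ b, w b • φ b - φ a‖ ^ 2 := by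
  set V := ∑ a, w a * ‖∑ b, w b • φ b - φ a‖ ^ 2
  calc ∑ a, ∑ b, w a * w b * ‖φ a - φ b‖ ^ 2
      = ∑ a, w a * (‖φ a - ∑ b, w b • φ b‖ ^ 2 + V) := by
        refine sum_congr rfl fun a _ => ?_
        rw [← sum_mul_norm_sub_sq_eq hw, mul_sum]
        simp only [mul_assoc]
    _ = 2 * V := by
        simp only [mul_add, sum_add_distrib, ← sum_mul, hw, norm_sub_rev (φ _)]
        ring

theorem sum_mul_norm_sub_sq_le (hw₀ : ∀ a, 0 ≤ w a) (hw : ∑ a, w a = 1) {φ ψ : κ → F}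
    (hφψ : ∀ a b, ‖φ a - φ b‖ ≤ ‖ψ a - ψ b‖) (x : F) :
    ∑ a, w a * ‖∑ b, w b • φ b - φ a‖ ^ 2 ≤ ∑ a, w a * ‖x - ψ a‖ ^ 2 := by
  have hpair : ∑ a, ∑ b, w a * w b * ‖φ a - φ b‖ ^ 2 ≤ ∑ a, ∑ b, w a * w b * ‖ψ a - ψ b‖ ^ 2 := by
    gcongr with a _ b _
    · exact mul_nonneg (hw₀ a) (hw₀ b)
    · exact hφψ a b
  rw [sum_sum_mul_norm_sub_sq_eq hw, sum_sum_mul_norm_sub_sq_eq hw] at hpair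
  rw [sum_mul_norm_sub_sq_eq hw ψ x]
  linarith [sq_nonneg ‖x - ∑ b, w b • ψ b‖]

end Weighted

theorem norm_add_smul_sub_lt {x P z : F} (hxP : x ≠ P) (hz : ⟪x - P, z - P⟫ ≤ 0) {t : ℝ}
    (ht₀ : 0 < t) (ht₁ : t ≤ 1) : ‖x + t • (P - x) - z‖ < ‖x - z‖ := by
  refine lt_of_pow_lt_pow_left₀ 2 (norm_nonneg _) ?_
  have hd : 0 < ‖x - P‖ ^ 2 := pow_pos (norm_pos_iff.2 (sub_ne_zero.2 hxP)) 2
  rw [show x + t • (P - x) - z = (1 - t) • (x - P) - (z - P) by module,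
    show x - z = (x - P) - (z - P) by abel, norm_sub_sq_real (_ • _), norm_sub_sq_real (x - P),
    real_inner_smul_left, norm_smul, mul_pow, Real.norm_eq_abs, sq_abs]
  nlinarith [mul_pos ht₀ hd, mul_nonneg (mul_nonneg ht₀.le (sub_nonneg.2 ht₁)) hd.le]

variable {ι : Type*}

theorem mem_convexHull_active_of_isMinOn_sup' {s : Finset ι} (hs : s.Nonempty) (h : ι → F)
    (r : ι → ℝ) {w₀ : F} (hw₀ : w₀ ∈ convexHull ℝ (h '' s))
    (hmin : IsMinOn (fun w => s.sup' hs fun i => ‖w - h i‖ ^ 2 - r i)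
      (convexHull ℝ (h '' s)) w₀) :
    w₀ ∈ convexHull ℝ
      (h '' {i | i ∈ s ∧ ‖w₀ - h i‖ ^ 2 - r i = s.sup' hs fun i => ‖w₀ - h i‖ ^ 2 - r i}) := by
  set g : ι → F → ℝ := fun i w => ‖w - h i‖ ^ 2 - r i
  set m := s.sup' hs fun i => g i w₀
  set K := convexHull ℝ (h '' {i | i ∈ s ∧ g i w₀ = m})
  by_contra hw₀K
  have hK : IsCompact K :=
    ((s.finite_toSet.subset fun i hi => hi.1).image h).isCompact_convexHull ℝ
  have hKne : K.Nonempty := by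
    obtain ⟨i, hi, him⟩ := s.exists_mem_eq_sup' hs fun i => g i w₀
    exact ⟨h i, subset_convexHull ℝ _ ⟨i, ⟨hi, him.symm⟩, rfl⟩⟩
  obtain ⟨P, hPK, hPmin⟩ :=
    exists_norm_eq_iInf_of_complete_convex hKne hK.isComplete (convex_convexHull ℝ _) w₀
  have hproj := (norm_eq_iInf_iff_real_inner_le_zero (convex_convexHull ℝ _) hPK).1 hPmin
  have hne : w₀ ≠ P := fun hw₀P => hw₀K (hw₀P ▸ hPK)
  have hdecrease : ∀ᶠ t in 𝓝[>] (0 : ℝ), ∀ i ∈ s, g i (w₀ + t • (P - w₀)) < m := by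
    rw [eventually_all_finset]
    intro i hi
    by_cases hact : g i w₀ = m
    · filter_upwards [Ioc_mem_nhdsGT zero_lt_one] with t ht
      have hcloser := norm_add_smul_sub_lt hne
        (hproj _ (subset_convexHull ℝ _ ⟨i, ⟨hi, hact⟩, rfl⟩)) ht.1 ht.2
      have hsq := pow_lt_pow_left₀ hcloser (norm_nonneg _) two_ne_zero
      simp only [g] at hact ⊢
      linarith
    · have hlt : g i w₀ < m := lt_of_le_of_ne (s.le_sup' (fun j => g j w₀) hi) hact
      have hcont : Continuous fun t : ℝ => g i (w₀ + t • (P - w₀)) := by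
        simp only [g]
        fun_prop
      exact ((hcont.tendsto' 0 _ (by simp)).eventually_lt_const hlt).filter_mono
        nhdsWithin_le_nhds
  have hmem : ∀ᶠ t in 𝓝[>] (0 : ℝ), w₀ + t • (P - w₀) ∈ convexHull ℝ (h '' s) := by
    filter_upwards [Ioc_mem_nhdsGT zero_lt_one] with t ht
    have hPC : P ∈ convexHull ℝ (h '' s) :=
      convexHull_mono (Set.image_mono fun i hi => hi.1) hPK
    exact (convex_convexHull ℝ _).add_smul_sub_mem hw₀ hPC ⟨ht.1.le, ht.2⟩
  obtain ⟨t, hlt, htC⟩ := (hdecrease.and hmem).exists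
  exact (isMinOn_iff.1 hmin _ htC).not_gt ((s.sup'_lt_iff hs).2 hlt)

theorem kirszbraun_finset (s : Finset ι) {p h : ι → F}
    (hph : ∀ i ∈ s, ∀ j ∈ s, ‖h i - h j‖ ≤ ‖p i - p j‖) (x : F) :
    ∃ w, ∀ i ∈ s, ‖w - h i‖ ≤ ‖x - p i‖ := by
  rcases s.eq_empty_or_nonempty with rfl | hs
  · exact ⟨x, by simp⟩
  set f : F → ℝ := fun w => s.sup' hs fun i => ‖w - h i‖ ^ 2 - ‖x - p i‖ ^ 2
  have hC : IsCompact (convexHull ℝ (h '' s)) :=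
    (s.finite_toSet.image h).isCompact_convexHull ℝ
  have hf : Continuous f := Continuous.finset_sup'_apply hs fun i _ => by fun_prop
  obtain ⟨w₀, hw₀C, hmin⟩ :=
    hC.exists_isMinOn ((hs.to_set.image h).convexHull) hf.continuousOn
  obtain ⟨κ, _, c, z, hc₀, hc₁, hz, hw₀⟩ := mem_convexHull_iff_exists_fintype.1
    (mem_convexHull_active_of_isMinOn_sup' hs h _ hw₀C hmin)
  choose j hj hjz using hz
  obtain rfl : z = h ∘ j := funext fun a => (hjz a).symm
  have hf₀ : f w₀ ≤ 0 := by
    have hmean := sum_mul_norm_sub_sq_le hc₀ hc₁ (φ := h ∘ j) (ψ := p ∘ j)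
      (fun a b => hph _ (hj a).1 _ (hj b).1) x
    rw [hw₀] at hmean
    calc f w₀ = ∑ a, c a * (‖w₀ - h (j a)‖ ^ 2 - ‖x - p (j a)‖ ^ 2) := by
          simp only [(hj _).2, ← sum_mul, hc₁, one_mul, f]
      _ ≤ 0 := by
          simp only [mul_sub, sum_sub_distrib, Function.comp_apply] at hmean ⊢
          linarith
  refine ⟨w₀, fun i hi => ?_⟩
  have hle := (s.le_sup' (fun i => ‖w₀ - h i‖ ^ 2 - ‖x - p i‖ ^ 2) hi).trans hf₀
  exact (pow_le_pow_iff_left₀ (norm_nonneg _) (norm_nonneg _) two_ne_zero).1 (by linarith)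

theorem kirszbraun [ProperSpace F] {p h : ι → F} (hph : ∀ i j, ‖h i - h j‖ ≤ ‖p i - p j‖)
    (x : F) : ∃ w, ∀ i, ‖w - h i‖ ≤ ‖x - p i‖ := by
  classical
  rcases isEmpty_or_nonempty ι with _ | ⟨⟨i₀⟩⟩
  · exact ⟨x, isEmptyElim⟩
  have hball {w : F} {i} : w ∈ Metric.closedBall (h i) ‖x - p i‖ ↔ ‖w - h i‖ ≤ ‖x - p i‖ := by
    simp [dist_eq_norm]
  obtain ⟨w, -, hw⟩ := (isCompact_closedBall (h i₀) ‖x - p i₀‖).inter_iInter_nonempty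
    (fun i => Metric.closedBall (h i) ‖x - p i‖) (fun _ => Metric.isClosed_closedBall)
    fun u => by
      obtain ⟨w, hw⟩ := kirszbraun_finset (insert i₀ u) (fun i _ j _ => hph i j) x
      exact ⟨w, hball.2 (hw i₀ (mem_insert_self _ _)),
        Set.mem_iInter₂.2 fun i hi => hball.2 (hw i (mem_insert_of_mem hi))⟩
  exact ⟨w, fun i => hball.1 (Set.mem_iInter.1 hw i)⟩

end Kirszbraun

section Resolvent

variable {n : ℕ} {T : EuclideanSpace ℝ (Fin n) → Set (EuclideanSpace ℝ (Fin n))} {β : ℝ}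

theorem IsMonotoneOp.sq_norm_sub_le_inner (hT : IsMonotoneOp T) (hβ : 0 < β)
    {x y z z' : EuclideanSpace ℝ (Fin n)} (hz : β⁻¹ • (x - z) ∈ T z)
    (hz' : β⁻¹ • (y - z') ∈ T z') : ‖z - z'‖ ^ 2 ≤ ⟪z - z', x - y⟫ := by
  have hmono := hT z z' _ _ hz hz'
  rw [← smul_sub, real_inner_smul_right, ge_iff_le, mul_nonneg_iff_of_pos_left (inv_pos.2 hβ),
    show x - z - (y - z') = (x - y) - (z - z') by abel, inner_sub_right,
    real_inner_self_eq_norm_sq] at hmono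
  linarith

theorem IsMaximalMonotoneOp.exists_resolvent (hT : IsMaximalMonotoneOp T) (hβ : 0 < β)
    (x : EuclideanSpace ℝ (Fin n)) : ∃ z, β⁻¹ • (x - z) ∈ T z := by
  obtain ⟨hmono, hmax⟩ := hT
  obtain ⟨w, hw⟩ := kirszbraun (ι := {yv : _ × _ // yv.2 ∈ T yv.1})
    (p := fun a => a.1.1 + β • a.1.2) (h := fun a => a.1.1 - β • a.1.2) (fun a b => by
      rw [show a.1.1 - β • a.1.2 - (b.1.1 - β • b.1.2) =
          (a.1.1 - b.1.1) - β • (a.1.2 - b.1.2) by module,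
        show a.1.1 + β • a.1.2 - (b.1.1 + β • b.1.2) =
          (a.1.1 - b.1.1) + β • (a.1.2 - b.1.2) by module,
        norm_sub_le_norm_add_iff_inner_nonneg, real_inner_smul_right]
      exact mul_nonneg hβ.le (hmono _ _ _ _ a.2 b.2)) x
  refine ⟨(2 : ℝ)⁻¹ • (w + x), hmax _ _ fun y v hv => ?_⟩
  have hwyv := hw ⟨(y, v), hv⟩
  set z := (2 : ℝ)⁻¹ • (w + x)
  have hscale : β • (β⁻¹ • (x - z) - v) = (x - z) - β • v := by
    rw [smul_sub, smul_inv_smul₀ hβ.ne']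
  rw [show w - (y - β • v) = (z - y) - ((x - z) - β • v) by simp only [z]; module,
    show x - (y + β • v) = (z - y) + ((x - z) - β • v) by simp only [z]; module,
    norm_sub_le_norm_add_iff_inner_nonneg, ← hscale, real_inner_smul_right] at hwyv
  exact nonneg_of_mul_nonneg_right hwyv hβ

end Resolvent

theorem resolvent_single_valued_and_monotone {n : ℕ}
    (T : EuclideanSpace ℝ (Fin n) → Set (EuclideanSpace ℝ (Fin n)))
    (hT : IsMaximalMonotoneOp T)
    (β : ℝ) (hβ : 0 < β) :
    (∀ x : EuclideanSpace ℝ (Fin n), ∃! z : EuclideanSpace ℝ (Fin n),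
        β⁻¹ • (x - z) ∈ T z) ∧
    (∀ J : EuclideanSpace ℝ (Fin n) → EuclideanSpace ℝ (Fin n),
        (∀ x, β⁻¹ • (x - J x) ∈ T (J x)) →
        ∀ x y, ⟪J x - J y, x - y⟫ ≥ 0) := by
  refine ⟨fun x => ?_, fun J hJ x y =>
    (sq_nonneg _).trans (hT.1.sq_norm_sub_le_inner hβ (hJ x) (hJ y))⟩
  obtain ⟨z, hz⟩ := hT.exists_resolvent hβ x
  refine ⟨z, hz, fun z' hz' => ?_⟩
  have hzz' := hT.1.sq_norm_sub_le_inner hβ hz' hz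
  rw [sub_self, inner_zero_right] at hzz'
  simpa [sub_eq_zero] using hzz'
end

section
/- Let S ⊆ ℝⁿ be nonempty and let (x^k)_{k∈ℕ} be a sequence in ℝⁿ that is Fejér convergent to S. If some cluster point x* of (x^k) belongs to S (i.e., some subsequence of (x^k) converges to x* ∈ S), then the whole sequence (x^k) converges to x*. -/
/-! Fejér monotonicity at `x* ∈ S` makes `‖x^k - x*‖` eventually nonincreasing, and a
nonincreasing real sequence converges to the limit of any of its subsequences, here `0`. -/

open Filter

/-- The sequence `x` is Fejér convergent to the set `S`. -/
def FejerConvergent {n : ℕ}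
    (x : ℕ → EuclideanSpace ℝ (Fin n)) (S : Set (EuclideanSpace ℝ (Fin n))) : Prop :=
  ∀ p ∈ S, ∃ k₀ : ℕ, ∀ k ≥ k₀, ‖x (k + 1) - p‖ ≤ ‖x k - p‖

open Set Topology

theorem tendsto_of_antitoneOn_Ici_of_subseq {α : Type*} [ConditionallyCompleteLinearOrder α]
    [TopologicalSpace α] [OrderTopology α] [NoMinOrder α] {u : ℕ → α} {k₀ : ℕ} {φ : ℕ → ℕ}
    {l : α} (hu : AntitoneOn u (Ici k₀)) (hφ : Tendsto φ atTop atTop)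
    (h : Tendsto (u ∘ φ) atTop (𝓝 l)) : Tendsto u atTop (𝓝 l) := by
  rw [← tendsto_add_atTop_iff_nat k₀]
  have hanti : Antitone fun k ↦ u (k + k₀) := antitone_add_nat_iff_antitoneOn_nat_Ici.2 hu
  refine (tendsto_iff_tendsto_subseq_of_antitone hanti ((tendsto_sub_atTop_nat k₀).comp hφ)).2
    (h.congr' ?_)
  filter_upwards [hφ.eventually_ge_atTop k₀] with k hk
  simp [Nat.sub_add_cancel hk]

theorem tendsto_of_antitoneOn_dist_of_subseq {α : Type*} [PseudoMetricSpace α] {x : ℕ → α}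
    {a : α} {k₀ : ℕ} {φ : ℕ → ℕ} (hx : AntitoneOn (fun k ↦ dist (x k) a) (Ici k₀))
    (hφ : Tendsto φ atTop atTop) (h : Tendsto (x ∘ φ) atTop (𝓝 a)) : Tendsto x atTop (𝓝 a) :=
  tendsto_iff_dist_tendsto_zero.2 <|
    tendsto_of_antitoneOn_Ici_of_subseq hx hφ (tendsto_iff_dist_tendsto_zero.1 h)

theorem FejerConvergent.exists_antitoneOn_dist {n : ℕ} {x : ℕ → EuclideanSpace ℝ (Fin n)}
    {S : Set (EuclideanSpace ℝ (Fin n))} (hx : FejerConvergent x S) {p : EuclideanSpace ℝ (Fin n)}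
    (hp : p ∈ S) : ∃ k₀, AntitoneOn (fun k ↦ dist (x k) p) (Ici k₀) := by
  obtain ⟨k₀, hk₀⟩ := hx p hp
  exact ⟨k₀, antitoneOn_nat_Ici_of_succ_le fun k hk ↦ by simpa only [dist_eq_norm] using hk₀ k hk⟩

theorem fejer_cluster_point_in_set_implies_convergence_general {n : ℕ}
    (S : Set (EuclideanSpace ℝ (Fin n)))
    (x : ℕ → EuclideanSpace ℝ (Fin n))
    (hx : FejerConvergent x S)
    (xstar : EuclideanSpace ℝ (Fin n)) (hxstarS : xstar ∈ S)
    (hcluster : ∃ φ : ℕ → ℕ, StrictMono φ ∧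
        Tendsto (fun k => x (φ k)) atTop (nhds xstar)) :
    Tendsto x atTop (nhds xstar) := by
  obtain ⟨φ, hφ, hxφ⟩ := hcluster
  obtain ⟨k₀, hanti⟩ := hx.exists_antitoneOn_dist hxstarS
  exact tendsto_of_antitoneOn_dist_of_subseq hanti hφ.tendsto_atTop hxφ

theorem fejer_cluster_point_in_set_implies_convergence {n : ℕ}
    (S : Set (EuclideanSpace ℝ (Fin n))) (hS : S.Nonempty)
    (x : ℕ → EuclideanSpace ℝ (Fin n))
    (hx : FejerConvergent x S)
    (xstar : EuclideanSpace ℝ (Fin n)) (hxstarS : xstar ∈ S)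
    (hcluster : ∃ φ : ℕ → ℕ, StrictMono φ ∧
        Tendsto (fun k => x (φ k)) atTop (nhds xstar)) :
    Tendsto x atTop (nhds xstar) :=
  fejer_cluster_point_in_set_implies_convergence_general S x hx xstar hxstarS hcluster
end

section
/- (Termination of the Armijo-type linesearch.) Let A : ℝⁿ → ℝⁿ be continuous, let B : ℝⁿ → Set ℝⁿ be maximal monotone, and let β > 0, δ ∈ (0,1), θ ∈ (0,1). Let z, J ∈ ℝⁿ with z ≠ J satisfy z − βA(z) ∈ J + βB(J), i.e., (z − βA(z) − J)/β ∈ B(J). Let (u_j)_{j∈ℕ} be a bounded sequence with u_j ∈ B(θ^j J + (1−θ^j) z) for every j. Then there exists j ∈ ℕ such that ⟨A(θ^j J + (1−θ^j) z) + u_j, z − J⟩ ≥ (δ/β)‖z − J‖². -/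
/-!
Suppose the linesearch never stops. The trial points `θ^j J + (1 - θ^j) z` tend to `z`, and a
subsequence of the bounded `u_j` converges to some `ū`; since the graph of a maximal monotone
operator is closed, `ū ∈ B z`. Passing to the limit in the failed tests gives
`⟪A z + ū, z - J⟫ ≤ (δ/β) ‖z - J‖²`. On the other hand, monotonicity of `B` between `(z, ū)` and
`(J, β⁻¹(z - βA z - J))` gives `⟪A z + ū, z - J⟫ ≥ β⁻¹ ‖z - J‖²`, which is larger because `δ < 1`
and `z ≠ J`.
-/

open scoped RealInnerProductSpace
open Filter Topology

theorem tendsto_pow_smul_add_one_sub_pow_smul {E : Type*} [NormedAddCommGroup E]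
    [NormedSpace ℝ E] {θ : ℝ} (hθ₀ : 0 ≤ θ) (hθ₁ : θ < 1) (a b : E) :
    Tendsto (fun j : ℕ => θ ^ j • a + (1 - θ ^ j) • b) atTop (𝓝 b) := by
  have hpow := tendsto_pow_atTop_nhds_zero_of_lt_one hθ₀ hθ₁
  simpa using (hpow.smul_const a).add (((tendsto_const_nhds (x := (1 : ℝ))).sub hpow).smul_const b)

theorem add_inv_smul_sub_smul_sub {E : Type*} [AddCommGroup E] [Module ℝ E] {β : ℝ} (hβ : β ≠ 0)
    (a z J : E) : a + β⁻¹ • (z - β • a - J) = β⁻¹ • (z - J) := by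
  rw [smul_sub, smul_sub, smul_smul, inv_mul_cancel₀ hβ, one_smul, smul_sub]
  abel

section MaximalMonotone

variable {n : ℕ} {B : EuclideanSpace ℝ (Fin n) → Set (EuclideanSpace ℝ (Fin n))}

theorem IsMaximalMonotoneOp.mem_of_tendsto (hB : IsMaximalMonotoneOp B) {ι : Type*}
    {l : Filter ι} [l.NeBot] {x u : ι → EuclideanSpace ℝ (Fin n)} {x₀ u₀ : EuclideanSpace ℝ (Fin n)}
    (hx : Tendsto x l (𝓝 x₀)) (hu : Tendsto u l (𝓝 u₀)) (hxu : ∀ k, u k ∈ B (x k)) :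
    u₀ ∈ B x₀ := by
  refine hB.2 x₀ u₀ fun y v hv => ?_
  have hlim : Tendsto (fun k => ⟪x k - y, u k - v⟫) l (𝓝 ⟪x₀ - y, u₀ - v⟫) :=
    (hx.sub tendsto_const_nhds).inner (hu.sub tendsto_const_nhds)
  exact ge_of_tendsto' hlim fun k => hB.1 _ _ _ _ (hxu k) hv

theorem IsMonotoneOp.inv_mul_norm_sq_le_inner (hB : IsMonotoneOp B)
    {A : EuclideanSpace ℝ (Fin n) → EuclideanSpace ℝ (Fin n)} {β : ℝ} (hβ : β ≠ 0)
    {z J v : EuclideanSpace ℝ (Fin n)} (hJ : β⁻¹ • (z - β • A z - J) ∈ B J) (hv : v ∈ B z) :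
    β⁻¹ * ‖z - J‖ ^ 2 ≤ ⟪A z + v, z - J⟫ :=
  calc β⁻¹ * ‖z - J‖ ^ 2 = ⟪A z + β⁻¹ • (z - β • A z - J), z - J⟫ := by
        rw [add_inv_smul_sub_smul_sub hβ, real_inner_smul_left, real_inner_self_eq_norm_sq]
    _ ≤ ⟪A z + v, z - J⟫ := by
        have hmono := hB z J v _ hv hJ
        rw [real_inner_comm, inner_sub_left] at hmono
        rw [inner_add_left, inner_add_left]
        linarith

end MaximalMonotone

theorem linesearch_terminates {n : ℕ}
    (A : EuclideanSpace ℝ (Fin n) → EuclideanSpace ℝ (Fin n))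
    (hA : Continuous A)
    (B : EuclideanSpace ℝ (Fin n) → Set (EuclideanSpace ℝ (Fin n)))
    (hB : IsMaximalMonotoneOp B)
    (β δ θ : ℝ) (hβ : 0 < β) (hδ : δ ∈ Set.Ioo (0 : ℝ) 1) (hθ : θ ∈ Set.Ioo (0 : ℝ) 1)
    (z J : EuclideanSpace ℝ (Fin n)) (hzJ : z ≠ J)
    (hJ : β⁻¹ • (z - β • A z - J) ∈ B J)
    (u : ℕ → EuclideanSpace ℝ (Fin n))
    (hu_bdd : Bornology.IsBounded (Set.range u))
    (hu : ∀ j : ℕ, u j ∈ B (θ ^ j • J + (1 - θ ^ j) • z)) :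
    ∃ j : ℕ, ⟪A (θ ^ j • J + (1 - θ ^ j) • z) + u j, z - J⟫ ≥
      (δ / β) * ‖z - J‖ ^ 2 := by
  by_contra! hfail
  obtain ⟨ū, -, φ, hφ, hū⟩ := tendsto_subseq_of_bounded hu_bdd (fun j => Set.mem_range_self j)
  have hxz := (tendsto_pow_smul_add_one_sub_pow_smul hθ.1.le hθ.2 J z).comp hφ.tendsto_atTop
  have hūB : ū ∈ B z := hB.mem_of_tendsto hxz hū fun k => hu (φ k)
  have hle : ⟪A z + ū, z - J⟫ ≤ (δ / β) * ‖z - J‖ ^ 2 :=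
    le_of_tendsto' ((((hA.tendsto z).comp hxz).add hū).inner tendsto_const_nhds)
      fun k => (hfail (φ k)).le
  have hge := hB.1.inv_mul_norm_sq_le_inner hβ.ne' hJ hūB
  have hlt : δ / β * ‖z - J‖ ^ 2 < β⁻¹ * ‖z - J‖ ^ 2 := by
    refine mul_lt_mul_of_pos_right ?_ (pow_pos (norm_sub_pos_iff.mpr hzJ) 2)
    rw [div_eq_mul_inv, mul_comm]
    exact mul_lt_of_lt_one_right (inv_pos.mpr hβ) hδ.2
  linarith
end

section
/- In the setting of the algorithm described in the context, for every i ∈ {1,…,m}, lim_{k→∞} ⟨A_i(x̄_i^k) + ū_i^k, z_i^k − x̄_i^k⟩ = 0. -/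
open scoped RealInnerProductSpace
open Filter

/-!
A point `x⋆ ∈ S* ∩ X` lies in every half-space `H_i^k`, by monotonicity of `A_i + B_i`. Projecting
`z_i^k` onto `H_i^k` and then onto `X` therefore decreases `‖z_i^k - x⋆‖²` by at least
`‖P_H(z_i^k) - z_i^k‖²`, so these squared distances decrease along the sweeps and their successive
differences tend to zero. The gap is nonnegative (line search) and at most
`‖A_i(x̄_i^k) + ū_i^k‖ · ‖P_H(z_i^k) - z_i^k‖`, and the directions `A_i(x̄_i^k) + ū_i^k` stay
bounded: the iterates are bounded, hence so are the resolvent points `J_i^k`, the points `x̄_i^k`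
between them, and `A_i` on a ball containing all of these.
-/

open Set Topology

section MetricProjection

variable {E : Type*} [NormedAddCommGroup E] [InnerProductSpace ℝ E]

def IsMetricProj (K : Set E) (z p : E) : Prop :=
  p ∈ K ∧ ∀ y ∈ K, ‖p - z‖ ≤ ‖y - z‖

theorem IsMetricProj.sq_norm_sub_add_sq_norm_sub_le {K : Set E} {z p y : E} (hK : Convex ℝ K)
    (hp : IsMetricProj K z p) (hy : y ∈ K) : ‖p - z‖ ^ 2 + ‖y - p‖ ^ 2 ≤ ‖y - z‖ ^ 2 := by
  have : Nonempty K := ⟨⟨p, hp.1⟩⟩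
  have hinf : ‖z - p‖ = ⨅ w : K, ‖z - w‖ :=
    le_antisymm (le_ciInf fun w => by simpa only [norm_sub_rev] using hp.2 w w.2)
      (ciInf_le ⟨0, by rintro _ ⟨w, rfl⟩; exact norm_nonneg _⟩ (⟨p, hp.1⟩ : K))
  have hobtuse : ⟪z - p, y - p⟫ ≤ 0 := (norm_eq_iInf_iff_real_inner_le_zero hK hp.1).1 hinf y hy
  rw [show y - z = (y - p) - (z - p) by abel, @norm_sub_sq_real _ _ _ (y - p),
    norm_sub_rev p z, real_inner_comm]
  linarith

theorem convex_halfSpace_inner_sub_le_zero (v c : E) : Convex ℝ {y : E | ⟪v, y - c⟫ ≤ 0} := by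
  simp only [inner_sub_right, sub_nonpos]
  exact convex_halfSpace_le (innerₛₗ ℝ v).isLinear _

variable {X : Set E} {v c z p z' y : E}

theorem sq_norm_sub_add_sq_norm_sub_le_of_isMetricProj_halfSpace (hX : Convex ℝ X)
    (hp : IsMetricProj {w | ⟪v, w - c⟫ ≤ 0} z p) (hz' : IsMetricProj X p z')
    (hyH : ⟪v, y - c⟫ ≤ 0) (hyX : y ∈ X) : ‖z' - y‖ ^ 2 + ‖p - z‖ ^ 2 ≤ ‖z - y‖ ^ 2 := by
  have hH := hp.sq_norm_sub_add_sq_norm_sub_le (convex_halfSpace_inner_sub_le_zero v c) hyH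
  have hX := hz'.sq_norm_sub_add_sq_norm_sub_le hX hyX
  rw [norm_sub_rev z', norm_sub_rev z]
  nlinarith [sq_nonneg ‖z' - p‖]

theorem sq_inner_sub_le_of_isMetricProj_halfSpace (hX : Convex ℝ X)
    (hp : IsMetricProj {w | ⟪v, w - c⟫ ≤ 0} z p) (hz' : IsMetricProj X p z')
    (hyH : ⟪v, y - c⟫ ≤ 0) (hyX : y ∈ X) (hgap : 0 ≤ ⟪v, z - c⟫) :
    ⟪v, z - c⟫ ^ 2 ≤ ‖v‖ ^ 2 * (‖z - y‖ ^ 2 - ‖z' - y‖ ^ 2) := by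
  have hle : ⟪v, z - c⟫ ≤ ‖v‖ * ‖p - z‖ := by
    have hpH : ⟪v, p - c⟫ ≤ 0 := hp.1
    rw [show z - c = (z - p) + (p - c) by abel, inner_add_right, norm_sub_rev p]
    linarith [real_inner_le_norm v (z - p)]
  calc ⟪v, z - c⟫ ^ 2 ≤ (‖v‖ * ‖p - z‖) ^ 2 := pow_le_pow_left₀ hgap hle 2
    _ = ‖v‖ ^ 2 * ‖p - z‖ ^ 2 := mul_pow _ _ _
    _ ≤ ‖v‖ ^ 2 * (‖z - y‖ ^ 2 - ‖z' - y‖ ^ 2) := by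
      gcongr
      linarith [sq_norm_sub_add_sq_norm_sub_le_of_isMetricProj_halfSpace hX hp hz' hyH hyX]

end MetricProjection

theorem antitoneOn_Icc_of_succ_le {α : Type*} [Preorder α] {f : ℕ → α} {a b : ℕ}
    (hf : ∀ i ∈ Finset.Icc a b, f (i + 1) ≤ f i) : AntitoneOn f (Icc a (b + 1)) := by
  rintro i ⟨hai, -⟩ j ⟨-, hjb⟩ hij
  induction j, hij using Nat.le_induction with
  | base => exact le_rfl
  | succ j hij ih => exact (hf j (Finset.mem_Icc.2 ⟨hai.trans hij, by omega⟩)).trans (ih (by omega))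

section CyclicSweep

variable {d : ℕ → ℕ → ℝ} {m : ℕ}

theorem antitone_cyclic_start (hstep : ∀ k, ∀ i ∈ Finset.Icc 1 m, d k (i + 1) ≤ d k i)
    (hwrap : ∀ k, d (k + 1) 1 = d k (m + 1)) : Antitone fun k => d k 1 :=
  antitone_nat_of_succ_le fun k => (hwrap k).symm ▸
    antitoneOn_Icc_of_succ_le (hstep k) ⟨le_rfl, by omega⟩ ⟨by omega, le_rfl⟩ (by omega)

theorem tendsto_sub_succ_of_cyclic_antitone (hd : ∀ k, 0 ≤ d k 1)
    (hstep : ∀ k, ∀ i ∈ Finset.Icc 1 m, d k (i + 1) ≤ d k i)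
    (hwrap : ∀ k, d (k + 1) 1 = d k (m + 1)) {i : ℕ} (hi : i ∈ Finset.Icc 1 m) :
    Tendsto (fun k => d k i - d k (i + 1)) atTop (𝓝 0) := by
  obtain ⟨h1i, him⟩ := Finset.mem_Icc.1 hi
  have hconv := tendsto_atTop_ciInf (antitone_cyclic_start hstep hwrap) ⟨0, by
    rintro _ ⟨k, rfl⟩; exact hd k⟩
  have hsweep : Tendsto (fun k => d k 1 - d (k + 1) 1) atTop (𝓝 0) := by
    simpa using hconv.sub ((tendsto_add_atTop_iff_nat 1).2 hconv)
  refine squeeze_zero (fun k => sub_nonneg.2 (hstep k i hi)) (fun k => ?_) hsweep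
  have hanti := antitoneOn_Icc_of_succ_le (hstep k)
  rw [hwrap k]
  gcongr
  · exact hanti ⟨le_rfl, by omega⟩ ⟨h1i, by omega⟩ h1i
  · exact hanti ⟨by omega, by omega⟩ ⟨by omega, le_rfl⟩ (by omega)

theorem le_of_cyclic_antitone (hstep : ∀ k, ∀ i ∈ Finset.Icc 1 m, d k (i + 1) ≤ d k i)
    (hwrap : ∀ k, d (k + 1) 1 = d k (m + 1)) (k : ℕ) {i : ℕ} (h1i : 1 ≤ i) (him : i ≤ m + 1) :
    d k i ≤ d 0 1 :=
  (antitoneOn_Icc_of_succ_le (hstep k) ⟨le_rfl, by omega⟩ ⟨h1i, him⟩ h1i).trans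
    (antitone_cyclic_start hstep hwrap (Nat.zero_le k))

end CyclicSweep

theorem tendsto_zero_of_sq_le_mul {ι : Type*} {l : Filter ι} {g e : ι → ℝ} {M : ℝ}
    (hg : ∀ k, 0 ≤ g k) (hle : ∀ k, g k ^ 2 ≤ M * e k) (he : Tendsto e l (𝓝 0)) :
    Tendsto g l (𝓝 0) := by
  have hsq : Tendsto (fun k => g k ^ 2) l (𝓝 0) :=
    squeeze_zero (fun k => sq_nonneg _) hle (by simpa using he.const_mul M)
  simpa [Real.sqrt_sq (hg _)] using hsq.sqrt

section MonotoneOperators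

variable {n : ℕ} {A : EuclideanSpace ℝ (Fin n) → EuclideanSpace ℝ (Fin n)}
  {B : EuclideanSpace ℝ (Fin n) → Set (EuclideanSpace ℝ (Fin n))}
  {x u xs : EuclideanSpace ℝ (Fin n)}

theorem inner_add_sub_nonpos_of_neg_mem (hA : ∀ x y, ⟪A x - A y, x - y⟫ ≥ 0)
    (hB : IsMonotoneOp B) (hu : u ∈ B x) (hxs : -A xs ∈ B xs) : ⟪A x + u, xs - x⟫ ≤ 0 := by
  have hsum : ⟪A x + u, xs - x⟫ = -(⟪x - xs, u - -A xs⟫ + ⟪A x - A xs, x - xs⟫) := by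
    rw [real_inner_comm (x - xs), ← inner_add_right, ← inner_neg_left, real_inner_comm]
    congr 1 <;> abel
  rw [hsum]
  linarith [hB x xs u _ hu hxs, hA x xs]

theorem norm_resolvent_sub_le {β : ℝ} {z J : EuclideanSpace ℝ (Fin n)} (hB : IsMonotoneOp B)
    (hβ : 0 < β) (hJ : β⁻¹ • (z - β • A z - J) ∈ B J) (hxs : -A xs ∈ B xs) :
    ‖J - xs‖ ≤ ‖(z - xs) - β • (A z - A xs)‖ := by
  set w := (z - xs) - β • (A z - A xs)
  have hshift : β⁻¹ • (z - β • A z - J) - -A xs = β⁻¹ • (w - (J - xs)) := by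
    simp only [w, smul_sub, inv_smul_smul₀ hβ.ne']
    abel
  have hmono := hB J xs _ _ hJ hxs
  rw [hshift, real_inner_smul_right, inner_sub_right, real_inner_self_eq_norm_sq] at hmono
  have hle : ‖J - xs‖ ^ 2 ≤ ‖J - xs‖ * ‖w‖ :=
    (sub_nonneg.1 (nonneg_of_mul_nonneg_right hmono (inv_pos.2 hβ))).trans
      (real_inner_le_norm _ _)
  nlinarith [norm_nonneg (J - xs), norm_nonneg w]

theorem exists_norm_add_le_of_mem_segment_resolvent (hAc : Continuous A) (hB : IsMonotoneOp B)
    (hxs : -A xs ∈ B xs) {β : ℕ → ℝ} {βhi D R : ℝ} (hβ : ∀ k, 0 < β k) (hβhi : ∀ k, β k ≤ βhi)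
    {z J xbar ubar : ℕ → EuclideanSpace ℝ (Fin n)} (hz : ∀ k, ‖z k - xs‖ ≤ D)
    (hJ : ∀ k, (β k)⁻¹ • (z k - β k • A (z k) - J k) ∈ B (J k))
    (hxbar : ∀ k, xbar k ∈ segment ℝ (J k) (z k)) (hubar : ∀ k, ‖ubar k‖ ≤ R) :
    ∃ M, ∀ k, ‖A (xbar k) + ubar k‖ ≤ M := by
  obtain ⟨C, hC⟩ := (isCompact_closedBall xs D).exists_bound_of_continuousOn hAc.continuousOn
  have hzD k : z k ∈ Metric.closedBall xs D := mem_closedBall_iff_norm.2 (hz k)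
  have hxsD : xs ∈ Metric.closedBall xs D :=
    Metric.mem_closedBall_self ((norm_nonneg _).trans (hz 0))
  have hAz k : ‖A (z k) - A xs‖ ≤ C + C := norm_sub_le_of_le (hC _ (hzD k)) (hC _ hxsD)
  have hslack : 0 ≤ βhi * (C + C) :=
    mul_nonneg ((hβ 0).le.trans (hβhi 0)) ((norm_nonneg _).trans (hAz 0))
  have hJD k : J k ∈ Metric.closedBall xs (D + βhi * (C + C)) := by
    rw [mem_closedBall_iff_norm]
    calc ‖J k - xs‖ ≤ ‖(z k - xs) - β k • (A (z k) - A xs)‖ :=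
          norm_resolvent_sub_le hB (hβ k) (hJ k) hxs
      _ ≤ ‖z k - xs‖ + β k * ‖A (z k) - A xs‖ :=
          (norm_sub_le _ _).trans_eq (by rw [norm_smul, Real.norm_of_nonneg (hβ k).le])
      _ ≤ D + βhi * (C + C) := by
          gcongr
          exacts [hz k, (hβ 0).le.trans (hβhi 0), hβhi k, hAz k]
  have hxbarD k : xbar k ∈ Metric.closedBall xs (D + βhi * (C + C)) :=
    (convex_closedBall _ _).segment_subset (hJD k)
      (Metric.closedBall_subset_closedBall (le_add_of_nonneg_right hslack) (hzD k)) (hxbar k)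
  obtain ⟨C', hC'⟩ := (isCompact_closedBall xs (D + βhi * (C + C))).exists_bound_of_continuousOn
    hAc.continuousOn
  exact ⟨C' + R, fun k => (norm_add_le _ _).trans (add_le_add (hC' _ (hxbarD k)) (hubar k))⟩

end MonotoneOperators

theorem linesearch_output {E : Type*} [NormedAddCommGroup E] [InnerProductSpace ℝ E]
    {A : E → E} {B : E → Set E} {z J xbar ubar : E} {α c R : ℝ} (hα : α ∈ Ioc 0 1) (hc : 0 ≤ c)
    (hstop : z = J → xbar = z ∧ ubar ∈ B z ∧ ‖ubar‖ ≤ R)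
    (hsearch : z ≠ J → xbar = α • J + (1 - α) • z ∧ ubar ∈ B xbar ∧ ‖ubar‖ ≤ R ∧
      ⟪A xbar + ubar, z - J⟫ ≥ c * ‖z - J‖ ^ 2) :
    (ubar ∈ B xbar ∧ ‖ubar‖ ≤ R) ∧ xbar ∈ segment ℝ J z ∧ 0 ≤ ⟪A xbar + ubar, z - xbar⟫ := by
  by_cases hzJ : z = J
  · obtain ⟨hx, hu, huR⟩ := hstop hzJ
    subst hx
    exact ⟨⟨hu, huR⟩, right_mem_segment ℝ _ _, by simp⟩
  · obtain ⟨hx, hu, huR, hdesc⟩ := hsearch hzJ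
    have hdir : z - xbar = α • (z - J) := by rw [hx]; module
    refine ⟨⟨hu, huR⟩, ⟨α, 1 - α, hα.1.le, sub_nonneg.2 hα.2, by ring, hx.symm⟩, ?_⟩
    rw [hdir, real_inner_smul_right]
    exact mul_nonneg hα.1.le ((by positivity : 0 ≤ c * ‖z - J‖ ^ 2).trans hdesc)

theorem algorithm_gap_to_zero_general {n m : ℕ}
    (A : ℕ → EuclideanSpace ℝ (Fin n) → EuclideanSpace ℝ (Fin n))
    (B : ℕ → EuclideanSpace ℝ (Fin n) → Set (EuclideanSpace ℝ (Fin n)))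
    (hA_cont : ∀ i ∈ Finset.Icc 1 m, Continuous (A i))
    (hA_mono : ∀ i ∈ Finset.Icc 1 m, ∀ x y, ⟪A i x - A i y, x - y⟫ ≥ 0)
    (hB_max : ∀ i ∈ Finset.Icc 1 m, IsMaximalMonotoneOp (B i))
    (Sstar : Set (EuclideanSpace ℝ (Fin n)))
    (hSstar : Sstar = ⋂ i ∈ Finset.Icc 1 m, {x | -A i x ∈ B i x})
    (X : Set (EuclideanSpace ℝ (Fin n)))
    (hXcv : Convex ℝ X)
    (hSX : (Sstar ∩ X).Nonempty)
    (θ δ : ℝ) (hδ : δ ∈ Set.Ioo (0 : ℝ) 1)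
    (βlo βhi : ℝ) (hβlo : 0 < βlo)
    (β : ℕ → ℝ) (hβ : ∀ k, β k ∈ Set.Icc βlo βhi)
    (R : ℝ)
    (x : ℕ → EuclideanSpace ℝ (Fin n))
    (z J xbar ubar : ℕ → ℕ → EuclideanSpace ℝ (Fin n))
    (α : ℕ → ℕ → ℝ)
    (p : ℕ → ℕ → EuclideanSpace ℝ (Fin n))
    (PX : EuclideanSpace ℝ (Fin n) → EuclideanSpace ℝ (Fin n))
    (hPX : ∀ w, PX w ∈ X ∧ ∀ y ∈ X, ‖PX w - w‖ ≤ ‖y - w‖)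
    (hz1 : ∀ k, z k 1 = x k)
    (hxk1 : ∀ k, x (k + 1) = z k (m + 1))
    (hα : ∀ k, ∀ i ∈ Finset.Icc 1 m, α k i ∈ Set.Ioc (0 : ℝ) 1)
    (hJ : ∀ k, ∀ i ∈ Finset.Icc 1 m,
      (β k)⁻¹ • (z k i - β k • A i (z k i) - J k i) ∈ B i (J k i))
    (hstop : ∀ k, ∀ i ∈ Finset.Icc 1 m, z k i = J k i →
      z k (i + 1) = z k i ∧ xbar k i = z k i ∧
        ubar k i ∈ B i (z k i) ∧ ‖ubar k i‖ ≤ R)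
    (hsearch : ∀ k, ∀ i ∈ Finset.Icc 1 m, z k i ≠ J k i →
      ∃ j : ℕ, α k i = θ ^ j ∧
        xbar k i = α k i • J k i + (1 - α k i) • z k i ∧
        ubar k i ∈ B i (xbar k i) ∧ ‖ubar k i‖ ≤ R ∧
        ⟪A i (xbar k i) + ubar k i, z k i - J k i⟫ ≥
          (δ / β k) * ‖z k i - J k i‖ ^ 2 ∧
        ∀ j' < j, ∀ u ∈ B i (θ ^ j' • J k i + (1 - θ ^ j') • z k i), ‖u‖ ≤ R →
          ⟪A i (θ ^ j' • J k i + (1 - θ ^ j') • z k i) + u, z k i - J k i⟫ <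
            (δ / β k) * ‖z k i - J k i‖ ^ 2)
    (hp : ∀ k, ∀ i ∈ Finset.Icc 1 m,
      p k i ∈ {y : EuclideanSpace ℝ (Fin n) |
          ⟪A i (xbar k i) + ubar k i, y - xbar k i⟫ ≤ 0} ∧
        ∀ y ∈ {y : EuclideanSpace ℝ (Fin n) |
            ⟪A i (xbar k i) + ubar k i, y - xbar k i⟫ ≤ 0},
          ‖p k i - z k i‖ ≤ ‖y - z k i‖)
    (hznext : ∀ k, ∀ i ∈ Finset.Icc 1 m, z k (i + 1) = PX (p k i)) :
    ∀ i ∈ Finset.Icc 1 m,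
      Tendsto (fun k => ⟪A i (xbar k i) + ubar k i, z k i - xbar k i⟫)
        atTop (nhds (0 : ℝ)) := by
  intro i hi
  obtain ⟨xs, hxsS, hxsX⟩ := hSX
  have hxsB : ∀ i ∈ Finset.Icc 1 m, -A i xs ∈ B i xs := Set.mem_iInter₂.1 (hSstar ▸ hxsS)
  have hβpos k : 0 < β k := hβlo.trans_le (hβ k).1
  have hls k i (hi : i ∈ Finset.Icc 1 m) :=
    linesearch_output (hα k i hi) (div_nonneg hδ.1.le (hβpos k).le) (fun h => (hstop k i hi h).2)
      fun h => by
        obtain ⟨_, -, hx, hu, huR, hdesc, -⟩ := hsearch k i hi h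
        exact ⟨hx, hu, huR, hdesc⟩
  have hxsH k i (hi : i ∈ Finset.Icc 1 m) :=
    inner_add_sub_nonpos_of_neg_mem (hA_mono i hi) (hB_max i hi).1 (hls k i hi).1.1 (hxsB i hi)
  have hproj k i (hi : i ∈ Finset.Icc 1 m) : IsMetricProj X (p k i) (z k (i + 1)) :=
    hznext k i hi ▸ hPX (p k i)
  let d k i := ‖z k i - xs‖ ^ 2
  have hstep : ∀ k, ∀ i ∈ Finset.Icc 1 m, d k (i + 1) ≤ d k i := fun k i hi =>
    le_of_add_le_of_nonneg_left (sq_norm_sub_add_sq_norm_sub_le_of_isMetricProj_halfSpace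
      hXcv (hp k i hi) (hproj k i hi) (hxsH k i hi) hxsX) (sq_nonneg _)
  have hwrap k : d (k + 1) 1 = d k (m + 1) := by simp only [d, hz1, hxk1]
  obtain ⟨h1i, him⟩ := Finset.mem_Icc.1 hi
  have hbound k : ‖z k i - xs‖ ≤ ‖z 0 1 - xs‖ :=
    (pow_le_pow_iff_left₀ (norm_nonneg _) (norm_nonneg _) two_ne_zero).1
      (le_of_cyclic_antitone hstep hwrap k h1i (by omega))
  obtain ⟨M, hM⟩ := exists_norm_add_le_of_mem_segment_resolvent (hA_cont i hi) (hB_max i hi).1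
    (hxsB i hi) hβpos (fun k => (hβ k).2) hbound (fun k => hJ k i hi) (fun k => (hls k i hi).2.1)
    (fun k => (hls k i hi).1.2)
  refine tendsto_zero_of_sq_le_mul (M := M ^ 2) (fun k => (hls k i hi).2.2) (fun k => ?_)
    (tendsto_sub_succ_of_cyclic_antitone (fun k => sq_nonneg _) hstep hwrap hi)
  refine (sq_inner_sub_le_of_isMetricProj_halfSpace hXcv (hp k i hi) (hproj k i hi) (hxsH k i hi)
    hxsX (hls k i hi).2.2).trans ?_
  gcongr
  · exact sub_nonneg.2 (hstep k i hi)
  · exact hM k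

theorem algorithm_gap_to_zero {n m : ℕ} (hm : 1 ≤ m)
    (A : ℕ → EuclideanSpace ℝ (Fin n) → EuclideanSpace ℝ (Fin n))
    (B : ℕ → EuclideanSpace ℝ (Fin n) → Set (EuclideanSpace ℝ (Fin n)))
    (hA_cont : ∀ i ∈ Finset.Icc 1 m, Continuous (A i))
    (hA_mono : ∀ i ∈ Finset.Icc 1 m, ∀ x y, ⟪A i x - A i y, x - y⟫ ≥ 0)
    (hB_max : ∀ i ∈ Finset.Icc 1 m, IsMaximalMonotoneOp (B i))
    (Sstar : Set (EuclideanSpace ℝ (Fin n)))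
    (hSstar : Sstar = ⋂ i ∈ Finset.Icc 1 m, {x | -A i x ∈ B i x})
    (X : Set (EuclideanSpace ℝ (Fin n)))
    (hXne : X.Nonempty) (hXcl : IsClosed X) (hXcv : Convex ℝ X)
    (hXdom : ∀ i ∈ Finset.Icc 1 m, ∀ x ∈ X, (B i x).Nonempty)
    (hSX : (Sstar ∩ X).Nonempty)
    (θ δ : ℝ) (hθ : θ ∈ Set.Ioo (0 : ℝ) 1) (hδ : δ ∈ Set.Ioo (0 : ℝ) 1)
    (βlo βhi : ℝ) (hβlo : 0 < βlo) (hβle : βlo ≤ βhi)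
    (β : ℕ → ℝ) (hβ : ∀ k, β k ∈ Set.Icc βlo βhi)
    (R : ℝ) (hR : 0 < R)
    (x : ℕ → EuclideanSpace ℝ (Fin n))
    (z J xbar ubar : ℕ → ℕ → EuclideanSpace ℝ (Fin n))
    (α : ℕ → ℕ → ℝ)
    (p : ℕ → ℕ → EuclideanSpace ℝ (Fin n))
    (PX : EuclideanSpace ℝ (Fin n) → EuclideanSpace ℝ (Fin n))
    (hPX : ∀ w, PX w ∈ X ∧ ∀ y ∈ X, ‖PX w - w‖ ≤ ‖y - w‖)
    (hxX : ∀ k, x k ∈ X)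
    (hzX : ∀ k, ∀ i ∈ Finset.Icc 1 (m + 1), z k i ∈ X)
    (hz1 : ∀ k, z k 1 = x k)
    (hxk1 : ∀ k, x (k + 1) = z k (m + 1))
    (hα : ∀ k, ∀ i ∈ Finset.Icc 1 m, α k i ∈ Set.Ioc (0 : ℝ) 1)
    (hJ : ∀ k, ∀ i ∈ Finset.Icc 1 m,
      (β k)⁻¹ • (z k i - β k • A i (z k i) - J k i) ∈ B i (J k i))
    (hstop : ∀ k, ∀ i ∈ Finset.Icc 1 m, z k i = J k i →
      z k (i + 1) = z k i ∧ xbar k i = z k i ∧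
        ubar k i ∈ B i (z k i) ∧ ‖ubar k i‖ ≤ R)
    (hsearch : ∀ k, ∀ i ∈ Finset.Icc 1 m, z k i ≠ J k i →
      ∃ j : ℕ, α k i = θ ^ j ∧
        xbar k i = α k i • J k i + (1 - α k i) • z k i ∧
        ubar k i ∈ B i (xbar k i) ∧ ‖ubar k i‖ ≤ R ∧
        ⟪A i (xbar k i) + ubar k i, z k i - J k i⟫ ≥
          (δ / β k) * ‖z k i - J k i‖ ^ 2 ∧
        ∀ j' < j, ∀ u ∈ B i (θ ^ j' • J k i + (1 - θ ^ j') • z k i), ‖u‖ ≤ R →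
          ⟪A i (θ ^ j' • J k i + (1 - θ ^ j') • z k i) + u, z k i - J k i⟫ <
            (δ / β k) * ‖z k i - J k i‖ ^ 2)
    (hBne : ∀ k, ∀ i ∈ Finset.Icc 1 m, ∀ j : ℕ,
      ∃ u ∈ B i (θ ^ j • J k i + (1 - θ ^ j) • z k i), ‖u‖ ≤ R)
    (hp : ∀ k, ∀ i ∈ Finset.Icc 1 m,
      p k i ∈ {y : EuclideanSpace ℝ (Fin n) |
          ⟪A i (xbar k i) + ubar k i, y - xbar k i⟫ ≤ 0} ∧
        ∀ y ∈ {y : EuclideanSpace ℝ (Fin n) |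
            ⟪A i (xbar k i) + ubar k i, y - xbar k i⟫ ≤ 0},
          ‖p k i - z k i‖ ≤ ‖y - z k i‖)
    (hznext : ∀ k, ∀ i ∈ Finset.Icc 1 m, z k (i + 1) = PX (p k i)) :
    ∀ i ∈ Finset.Icc 1 m,
      Tendsto (fun k => ⟪A i (xbar k i) + ubar k i, z k i - xbar k i⟫)
        atTop (nhds (0 : ℝ)) :=
  algorithm_gap_to_zero_general A B hA_cont hA_mono hB_max Sstar hSstar X hXcv hSX θ δ hδ βlo βhi
    hβlo β hβ R x z J xbar ubar α p PX hPX hz1 hxk1 hα hJ hstop hsearch hp hznext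
end

section
/- In the setting of the algorithm described in the context, for every i ∈ {1,…,m}, lim_{k→∞} ‖z_{i+1}^k − z_i^k‖ = 0; consequently lim_{k→∞} ‖x^{k+1} − x^k‖ = 0, and the sequences (x^k)_{k∈ℕ} and (z_i^k)_{k∈ℕ} (for each i) have the same cluster points. -/
open scoped RealInnerProductSpace
open Filter

/-! A point `w ∈ S* ∩ X` lies in every half-space `H_i^k`, by monotonicity of `A_i + B_i` at
the zero `w`. Projecting onto a convex set containing `w` is Fejér monotone with respect to `w`,
so each step `z ↦ P_X (P_H z)` satisfies `‖z' - w‖² + ‖z' - z‖² / 2 ≤ ‖z - w‖²`. Summed over a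
sweep, `‖x^k - w‖²` drops by at least `‖z_{i+1}^k - z_i^k‖² / 2`; these drops are summable, so
the successive differences tend to zero, and telescoping gives `z_i^k - x^k → 0`. -/

open Finset Topology

section Projection

variable {F : Type*} [NormedAddCommGroup F] [InnerProductSpace ℝ F]

theorem convex_setOf_inner_sub_nonpos (a b : F) : Convex ℝ {y : F | ⟪a, y - b⟫ ≤ 0} := by
  simp only [inner_sub_right, sub_nonpos]
  exact convex_halfSpace_le (innerₛₗ ℝ a).isLinear ⟪a, b⟫

theorem norm_sub_sq_add_norm_sub_sq_le_of_nearest {K : Set F} (hK : Convex ℝ K) {u v w : F}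
    (hv : v ∈ K) (hmin : ∀ y ∈ K, ‖v - u‖ ≤ ‖y - u‖) (hw : w ∈ K) :
    ‖v - w‖ ^ 2 + ‖v - u‖ ^ 2 ≤ ‖u - w‖ ^ 2 := by
  have : Nonempty K := ⟨⟨v, hv⟩⟩
  have hbdd : BddBelow (Set.range fun y : K => ‖u - y‖) :=
    ⟨0, Set.forall_mem_range.2 fun _ => norm_nonneg _⟩
  have hinf : ‖u - v‖ = ⨅ y : K, ‖u - y‖ :=
    le_antisymm (le_ciInf fun y => by simpa only [norm_sub_rev u] using hmin y y.2)
      (ciInf_le hbdd ⟨v, hv⟩)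
  have hangle : ⟪u - v, w - v⟫ ≤ 0 :=
    (norm_eq_iInf_iff_real_inner_le_zero hK hv).mp hinf w hw
  have hexpand : ‖u - w‖ ^ 2 = ‖u - v‖ ^ 2 - 2 * ⟪u - v, w - v⟫ + ‖w - v‖ ^ 2 := by
    rw [← norm_sub_sq_real, sub_sub_sub_cancel_right]
  rw [hexpand, norm_sub_rev u, norm_sub_rev w]
  linarith

theorem norm_sub_sq_add_half_le_of_nearest_of_nearest {H X : Set F} (hH : Convex ℝ H)
    (hX : Convex ℝ X) {z p z' w : F} (hp : p ∈ H) (hpmin : ∀ y ∈ H, ‖p - z‖ ≤ ‖y - z‖)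
    (hz' : z' ∈ X) (hz'min : ∀ y ∈ X, ‖z' - p‖ ≤ ‖y - p‖) (hwH : w ∈ H) (hwX : w ∈ X) :
    ‖z' - w‖ ^ 2 + ‖z' - z‖ ^ 2 / 2 ≤ ‖z - w‖ ^ 2 := by
  have hH := norm_sub_sq_add_norm_sub_sq_le_of_nearest hH hp hpmin hwH
  have hX := norm_sub_sq_add_norm_sub_sq_le_of_nearest hX hz' hz'min hwX
  have htri : ‖z' - z‖ ≤ ‖z' - p‖ + ‖p - z‖ := norm_sub_le_norm_sub_add_norm_sub _ _ _
  nlinarith [norm_nonneg (z' - z), sq_nonneg (‖z' - p‖ - ‖p - z‖)]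

end Projection

theorem IsMonotoneOp.inner_add_sub_nonpos {n : ℕ}
    {T : EuclideanSpace ℝ (Fin n) → Set (EuclideanSpace ℝ (Fin n))} (hT : IsMonotoneOp T) {A : EuclideanSpace ℝ (Fin n) → EuclideanSpace ℝ (Fin n)}
    (hA : ∀ x y, ⟪A x - A y, x - y⟫ ≥ 0) {x u w : EuclideanSpace ℝ (Fin n)} (hu : u ∈ T x)
    (hw : -A w ∈ T w) : ⟪A x + u, w - x⟫ ≤ 0 := by
  have hAxw := hA x w
  have hTxw := hT x w u (-A w) hu hw
  simp only [inner_add_left, inner_sub_left, inner_sub_right, inner_neg_right] at hAxw hTxw ⊢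
  rw [real_inner_comm (A w) x, real_inner_comm (A w) w] at hTxw
  rw [real_inner_comm w u, real_inner_comm x u]
  linarith

theorem add_sum_Ico_le_of_forall_add_le {a b : ℕ → ℝ} {lo hi : ℕ} (hlohi : lo ≤ hi)
    (h : ∀ i ∈ Ico lo hi, a (i + 1) + b i ≤ a i) : a hi + ∑ i ∈ Ico lo hi, b i ≤ a lo := by
  induction hi, hlohi using Nat.le_induction with
  | base => simp
  | succ hi hlohi ih =>
    rw [sum_Ico_succ_top hlohi]
    have hstep := h hi (by simp [hlohi])
    have hprev := ih fun i hi' => h i (Ico_subset_Ico_right hi.le_succ hi')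
    linarith

theorem tendsto_zero_of_forall_add_le {u v : ℕ → ℝ} (hu : ∀ k, 0 ≤ u k) (hv : ∀ k, 0 ≤ v k)
    (h : ∀ k, u (k + 1) + v k ≤ u k) : Tendsto v atTop (𝓝 0) := by
  refine (summable_of_sum_range_le (c := u 0) hv fun N => ?_).tendsto_atTop_zero
  have := add_sum_Ico_le_of_forall_add_le (Nat.zero_le N) fun k _ => h k
  rw [← range_eq_Ico] at this
  linarith [hu N]

theorem tendsto_norm_succ_sub_of_sweep {E : Type*} [NormedAddCommGroup E] {m : ℕ}
    {x : ℕ → E} {z : ℕ → ℕ → E} {w : E} (hz1 : ∀ k, z k 1 = x k)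
    (hxk1 : ∀ k, x (k + 1) = z k (m + 1))
    (hstep : ∀ k, ∀ i ∈ Icc 1 m,
      ‖z k (i + 1) - w‖ ^ 2 + ‖z k (i + 1) - z k i‖ ^ 2 / 2 ≤ ‖z k i - w‖ ^ 2) :
    ∀ i ∈ Icc 1 m, Tendsto (fun k => ‖z k (i + 1) - z k i‖) atTop (𝓝 0) := by
  intro i hi
  have hsweep : ∀ k, ‖x (k + 1) - w‖ ^ 2 + ‖z k (i + 1) - z k i‖ ^ 2 / 2 ≤ ‖x k - w‖ ^ 2 := by
    intro k
    rw [← Ico_add_one_right_eq_Icc] at hstep hi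
    have hsum := add_sum_Ico_le_of_forall_add_le (a := fun i => ‖z k i - w‖ ^ 2)
      (b := fun i => ‖z k (i + 1) - z k i‖ ^ 2 / 2) (by omega : 1 ≤ m + 1) (hstep k)
    rw [hz1, ← hxk1] at hsum
    have hterm := single_le_sum (f := fun j => ‖z k (j + 1) - z k j‖ ^ 2 / 2)
      (fun j _ => by positivity) hi
    linarith
  have hsq := tendsto_zero_of_forall_add_le (u := fun k => ‖x k - w‖ ^ 2)
    (v := fun k => ‖z k (i + 1) - z k i‖ ^ 2 / 2) (fun k => by positivity)
    (fun k => by positivity) hsweep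
  simpa only [mul_zero, Real.sqrt_zero, mul_div_cancel₀ _ (two_ne_zero (α := ℝ)),
    Real.sqrt_sq (norm_nonneg _)] using (hsq.const_mul 2).sqrt

theorem tendsto_sub_of_tendsto_succ_sub {E : Type*} [NormedAddCommGroup E] {z : ℕ → ℕ → E}
    {lo hi : ℕ} (hlohi : lo ≤ hi)
    (h : ∀ i ∈ Ico lo hi, Tendsto (fun k => z k (i + 1) - z k i) atTop (𝓝 0)) :
    Tendsto (fun k => z k hi - z k lo) atTop (𝓝 0) := by
  simpa only [sum_Ico_sub _ hlohi, sum_const_zero] using tendsto_finsetSum _ h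

theorem MapClusterPt.of_tendsto_sub {ι G : Type*} [AddGroup G] [TopologicalSpace G]
    [ContinuousAdd G] {l : Filter ι} {u v : ι → G} {q : G} (hu : MapClusterPt q l u)
    (h : Tendsto (fun k => v k - u k) l (𝓝 0)) : MapClusterPt q l v := by
  rw [mapClusterPt_iff_frequently] at hu ⊢
  intro s hs
  have hadd : Tendsto (fun p : G × G => p.1 + p.2) (𝓝 0 ×ˢ 𝓝 q) (𝓝 q) := by
    simpa only [zero_add, nhds_prod_eq] using continuous_add.tendsto ((0 : G), q)
  obtain ⟨U, hU, V, hV, hUV⟩ := mem_prod_iff.mp (hadd hs)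
  refine ((hu V hV).and_eventually (h hU)).mono fun k hk => ?_
  simpa using hUV (Set.mk_mem_prod hk.2 hk.1)

theorem mapClusterPt_iff_of_tendsto_sub {ι G : Type*} [AddGroup G] [TopologicalSpace G]
    [IsTopologicalAddGroup G] {l : Filter ι} {u v : ι → G} {q : G}
    (h : Tendsto (fun k => v k - u k) l (𝓝 0)) : MapClusterPt q l u ↔ MapClusterPt q l v :=
  ⟨fun hu => hu.of_tendsto_sub h, fun hv => hv.of_tendsto_sub <| by simpa using h.neg⟩

theorem algorithm_successive_iterates_to_zero_general {n m : ℕ}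
    (A : ℕ → EuclideanSpace ℝ (Fin n) → EuclideanSpace ℝ (Fin n))
    (B : ℕ → EuclideanSpace ℝ (Fin n) → Set (EuclideanSpace ℝ (Fin n)))
    (hA_mono : ∀ i ∈ Finset.Icc 1 m, ∀ x y, ⟪A i x - A i y, x - y⟫ ≥ 0)
    (hB_max : ∀ i ∈ Finset.Icc 1 m, IsMaximalMonotoneOp (B i))
    (Sstar : Set (EuclideanSpace ℝ (Fin n)))
    (hSstar : Sstar = ⋂ i ∈ Finset.Icc 1 m, {x | -A i x ∈ B i x})
    (X : Set (EuclideanSpace ℝ (Fin n)))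
    (hXcv : Convex ℝ X)
    (hSX : (Sstar ∩ X).Nonempty)
    (θ δ : ℝ)
    (β : ℕ → ℝ)
    (R : ℝ)
    (x : ℕ → EuclideanSpace ℝ (Fin n))
    (z J xbar ubar : ℕ → ℕ → EuclideanSpace ℝ (Fin n))
    (α : ℕ → ℕ → ℝ)
    (p : ℕ → ℕ → EuclideanSpace ℝ (Fin n))
    (PX : EuclideanSpace ℝ (Fin n) → EuclideanSpace ℝ (Fin n))
    (hPX : ∀ w, PX w ∈ X ∧ ∀ y ∈ X, ‖PX w - w‖ ≤ ‖y - w‖)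
    (hz1 : ∀ k, z k 1 = x k)
    (hxk1 : ∀ k, x (k + 1) = z k (m + 1))
    (hstop : ∀ k, ∀ i ∈ Finset.Icc 1 m, z k i = J k i →
      z k (i + 1) = z k i ∧ xbar k i = z k i ∧
        ubar k i ∈ B i (z k i) ∧ ‖ubar k i‖ ≤ R)
    (hsearch : ∀ k, ∀ i ∈ Finset.Icc 1 m, z k i ≠ J k i →
      ∃ j : ℕ, α k i = θ ^ j ∧
        xbar k i = α k i • J k i + (1 - α k i) • z k i ∧
        ubar k i ∈ B i (xbar k i) ∧ ‖ubar k i‖ ≤ R ∧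
        ⟪A i (xbar k i) + ubar k i, z k i - J k i⟫ ≥
          (δ / β k) * ‖z k i - J k i‖ ^ 2 ∧
        ∀ j' < j, ∀ u ∈ B i (θ ^ j' • J k i + (1 - θ ^ j') • z k i), ‖u‖ ≤ R →
          ⟪A i (θ ^ j' • J k i + (1 - θ ^ j') • z k i) + u, z k i - J k i⟫ <
            (δ / β k) * ‖z k i - J k i‖ ^ 2)
    (hp : ∀ k, ∀ i ∈ Finset.Icc 1 m,
      p k i ∈ {y : EuclideanSpace ℝ (Fin n) |
          ⟪A i (xbar k i) + ubar k i, y - xbar k i⟫ ≤ 0} ∧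
        ∀ y ∈ {y : EuclideanSpace ℝ (Fin n) |
            ⟪A i (xbar k i) + ubar k i, y - xbar k i⟫ ≤ 0},
          ‖p k i - z k i‖ ≤ ‖y - z k i‖)
    (hznext : ∀ k, ∀ i ∈ Finset.Icc 1 m, z k (i + 1) = PX (p k i)) :
    (∀ i ∈ Finset.Icc 1 m,
        Tendsto (fun k => ‖z k (i + 1) - z k i‖) atTop (nhds (0 : ℝ))) ∧
      Tendsto (fun k => ‖x (k + 1) - x k‖) atTop (nhds (0 : ℝ)) ∧
      (∀ i ∈ Finset.Icc 1 m, ∀ q : EuclideanSpace ℝ (Fin n),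
        MapClusterPt q atTop x ↔ MapClusterPt q atTop (fun k => z k i)) := by
  obtain ⟨w, hwS, hwX⟩ := hSX
  have hwzero : ∀ i ∈ Icc 1 m, -A i w ∈ B i w := by
    rw [hSstar] at hwS
    exact Set.mem_iInter₂.mp hwS
  have hubar : ∀ k, ∀ i ∈ Icc 1 m, ubar k i ∈ B i (xbar k i) := by
    intro k i hi
    by_cases hzJ : z k i = J k i
    · obtain ⟨-, hxbar, hu, -⟩ := hstop k i hi hzJ
      rwa [hxbar]
    · obtain ⟨-, -, -, hu, -⟩ := hsearch k i hi hzJ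
      exact hu
  have hstep : ∀ k, ∀ i ∈ Icc 1 m,
      ‖z k (i + 1) - w‖ ^ 2 + ‖z k (i + 1) - z k i‖ ^ 2 / 2 ≤ ‖z k i - w‖ ^ 2 := by
    intro k i hi
    rw [hznext k i hi]
    exact norm_sub_sq_add_half_le_of_nearest_of_nearest (convex_setOf_inner_sub_nonpos _ _) hXcv
      (hp k i hi).1 (hp k i hi).2 (hPX _).1 (hPX _).2
      ((hB_max i hi).1.inner_add_sub_nonpos (hA_mono i hi) (hubar k i hi) (hwzero i hi)) hwX
  have hnorm := tendsto_norm_succ_sub_of_sweep hz1 hxk1 hstep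
  have hzx : ∀ i ∈ Icc 1 (m + 1), Tendsto (fun k => z k i - x k) atTop (𝓝 0) := by
    intro i hi
    obtain ⟨h1i, him⟩ := mem_Icc.mp hi
    simpa only [hz1] using tendsto_sub_of_tendsto_succ_sub h1i fun j hj =>
      tendsto_zero_iff_norm_tendsto_zero.mpr <|
        hnorm j (by rw [← Ico_add_one_right_eq_Icc]; exact Ico_subset_Ico_right him hj)
  refine ⟨hnorm, ?_, fun i hi q => mapClusterPt_iff_of_tendsto_sub (hzx i ?_)⟩
  · simpa only [← hxk1] using tendsto_zero_iff_norm_tendsto_zero.mp (hzx (m + 1) (by simp))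
  · exact Icc_subset_Icc_right m.le_succ hi

theorem algorithm_successive_iterates_to_zero {n m : ℕ} (hm : 1 ≤ m)
    (A : ℕ → EuclideanSpace ℝ (Fin n) → EuclideanSpace ℝ (Fin n))
    (B : ℕ → EuclideanSpace ℝ (Fin n) → Set (EuclideanSpace ℝ (Fin n)))
    (hA_cont : ∀ i ∈ Finset.Icc 1 m, Continuous (A i))
    (hA_mono : ∀ i ∈ Finset.Icc 1 m, ∀ x y, ⟪A i x - A i y, x - y⟫ ≥ 0)
    (hB_max : ∀ i ∈ Finset.Icc 1 m, IsMaximalMonotoneOp (B i))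
    (Sstar : Set (EuclideanSpace ℝ (Fin n)))
    (hSstar : Sstar = ⋂ i ∈ Finset.Icc 1 m, {x | -A i x ∈ B i x})
    (X : Set (EuclideanSpace ℝ (Fin n)))
    (hXne : X.Nonempty) (hXcl : IsClosed X) (hXcv : Convex ℝ X)
    (hXdom : ∀ i ∈ Finset.Icc 1 m, ∀ x ∈ X, (B i x).Nonempty)
    (hSX : (Sstar ∩ X).Nonempty)
    (θ δ : ℝ) (hθ : θ ∈ Set.Ioo (0 : ℝ) 1) (hδ : δ ∈ Set.Ioo (0 : ℝ) 1)
    (βlo βhi : ℝ) (hβlo : 0 < βlo) (hβle : βlo ≤ βhi)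
    (β : ℕ → ℝ) (hβ : ∀ k, β k ∈ Set.Icc βlo βhi)
    (R : ℝ) (hR : 0 < R)
    (x : ℕ → EuclideanSpace ℝ (Fin n))
    (z J xbar ubar : ℕ → ℕ → EuclideanSpace ℝ (Fin n))
    (α : ℕ → ℕ → ℝ)
    (p : ℕ → ℕ → EuclideanSpace ℝ (Fin n))
    (PX : EuclideanSpace ℝ (Fin n) → EuclideanSpace ℝ (Fin n))
    (hPX : ∀ w, PX w ∈ X ∧ ∀ y ∈ X, ‖PX w - w‖ ≤ ‖y - w‖)
    (hxX : ∀ k, x k ∈ X)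
    (hzX : ∀ k, ∀ i ∈ Finset.Icc 1 (m + 1), z k i ∈ X)
    (hz1 : ∀ k, z k 1 = x k)
    (hxk1 : ∀ k, x (k + 1) = z k (m + 1))
    (hα : ∀ k, ∀ i ∈ Finset.Icc 1 m, α k i ∈ Set.Ioc (0 : ℝ) 1)
    (hJ : ∀ k, ∀ i ∈ Finset.Icc 1 m,
      (β k)⁻¹ • (z k i - β k • A i (z k i) - J k i) ∈ B i (J k i))
    (hstop : ∀ k, ∀ i ∈ Finset.Icc 1 m, z k i = J k i →
      z k (i + 1) = z k i ∧ xbar k i = z k i ∧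
        ubar k i ∈ B i (z k i) ∧ ‖ubar k i‖ ≤ R)
    (hsearch : ∀ k, ∀ i ∈ Finset.Icc 1 m, z k i ≠ J k i →
      ∃ j : ℕ, α k i = θ ^ j ∧
        xbar k i = α k i • J k i + (1 - α k i) • z k i ∧
        ubar k i ∈ B i (xbar k i) ∧ ‖ubar k i‖ ≤ R ∧
        ⟪A i (xbar k i) + ubar k i, z k i - J k i⟫ ≥
          (δ / β k) * ‖z k i - J k i‖ ^ 2 ∧
        ∀ j' < j, ∀ u ∈ B i (θ ^ j' • J k i + (1 - θ ^ j') • z k i), ‖u‖ ≤ R →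
          ⟪A i (θ ^ j' • J k i + (1 - θ ^ j') • z k i) + u, z k i - J k i⟫ <
            (δ / β k) * ‖z k i - J k i‖ ^ 2)
    (hBne : ∀ k, ∀ i ∈ Finset.Icc 1 m, ∀ j : ℕ,
      ∃ u ∈ B i (θ ^ j • J k i + (1 - θ ^ j) • z k i), ‖u‖ ≤ R)
    (hp : ∀ k, ∀ i ∈ Finset.Icc 1 m,
      p k i ∈ {y : EuclideanSpace ℝ (Fin n) |
          ⟪A i (xbar k i) + ubar k i, y - xbar k i⟫ ≤ 0} ∧
        ∀ y ∈ {y : EuclideanSpace ℝ (Fin n) |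
            ⟪A i (xbar k i) + ubar k i, y - xbar k i⟫ ≤ 0},
          ‖p k i - z k i‖ ≤ ‖y - z k i‖)
    (hznext : ∀ k, ∀ i ∈ Finset.Icc 1 m, z k (i + 1) = PX (p k i)) :
    (∀ i ∈ Finset.Icc 1 m,
        Tendsto (fun k => ‖z k (i + 1) - z k i‖) atTop (nhds (0 : ℝ))) ∧
      Tendsto (fun k => ‖x (k + 1) - x k‖) atTop (nhds (0 : ℝ)) ∧
      (∀ i ∈ Finset.Icc 1 m, ∀ q : EuclideanSpace ℝ (Fin n),
        MapClusterPt q atTop x ↔ MapClusterPt q atTop (fun k => z k i)) :=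
  algorithm_successive_iterates_to_zero_general A B hA_mono hB_max Sstar hSstar X hXcv hSX θ δ β R x
    z J xbar ubar α p PX hPX hz1 hxk1 hstop hsearch hp hznext
end
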